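/- arXiv:1903.05032 — 4 statements merged into one kernel-verified Lean document; each statement's English description precedes it below -/
import Mathlib

section
/- Let V be an integral variety over an algebraically closed field, W an integral closed formal subscheme of the formal completion of V at a smooth point b. If there exist rational functions h1, h2 on V such that h1·dh2 is zero in the module of Kähler differentials of the function field of W but nonzero in the module of Kähler differentials of the function field of V, then W is not Zariski dense in V (i.e., W is contained in the formal completion of a proper closed subscheme of V). -/
/-- (A) If `x` is algebraic over `k` (char 0), its Kähler differential vanishes. -/
theorem D_eq_zero_of_isAlgebraic
    (k : Type*) [Field k] [CharZero k]
    (F : Type*) [Field F] [Algebra k F]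
    (x : F) (hx : IsAlgebraic k x) :
    KaehlerDifferential.D k F x = 0 := by
  have hint : IsIntegral k x := hx.isIntegral
  have hmin : Polynomial.aeval x (minpoly k x) = 0 := minpoly.aeval k x
  have hsep : (minpoly k x).Separable := (minpoly.irreducible hint).separable
  obtain ⟨a, b, hab⟩ := hsep
  have hd : Polynomial.aeval x ((minpoly k x).derivative) ≠ 0 := by
    intro h0
    have := congrArg (Polynomial.aeval x) hab
    simp [hmin, h0] at this
  have h := (KaehlerDifferential.D k F).map_aeval (minpoly k x) x
  rw [hmin, map_zero] at h
  have := (smul_eq_zero.mp h.symm).resolve_left hd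
  exact this


open TrivSqZeroExt in
set_option maxHeartbeats 1000000 in
/-- (B) If `x` is transcendental over `k` (char 0), its Kähler differential is nonzero. -/
theorem D_ne_zero_of_transcendental
    (k : Type*) [Field k] [CharZero k]
    (F : Type*) [Field F] [Algebra k F]
    (x : F) (hx : Transcendental k x) :
    KaehlerDifferential.D k F x ≠ 0 := by
  classical
  -- a transcendence basis containing x
  have hsing : AlgebraicIndependent k ((↑) : ({x} : Set F) → F) := by
    haveI : Unique (({x} : Set F) : Type _) := Set.uniqueSingleton x
    rw [algebraicIndependent_unique_type_iff]
    rw [show ((default : ({x} : Set F)) : F) = x from (default : ({x} : Set F)).2]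
    exact hx
  obtain ⟨S, hsub, hmax⟩ := exists_maximal_algebraicIndependent ({x} : Set F) Set.univ
    (Set.subset_univ _) hsing
  have hxS : x ∈ S := hsub rfl
  have hindep : AlgebraicIndependent k ((↑) : S → F) := hmax.1.1
  have hbasis : IsTranscendenceBasis k ((↑) : S → F) := by
    refine ⟨hindep, fun t ht hst => ?_⟩
    simp only [Subtype.range_coe_subtype, Set.setOf_mem_eq] at *
    exact hmax.eq_of_le ⟨ht, Set.subset_univ _⟩ hst
  set E := IntermediateField.adjoin k (Set.range ((↑) : S → F)) with hE
  haveI halg : Algebra.IsAlgebraic E F := hbasis.isAlgebraic_field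
  haveI : CharZero E := charZero_of_injective_algebraMap (algebraMap k E).injective
  haveI : PerfectField ↥E := PerfectField.ofCharZero
  haveI : Algebra.IsSeparable ↥E F := Algebra.IsAlgebraic.isSeparable_of_perfectField
  haveI : Algebra.FormallyEtale ↥E F := Algebra.FormallyEtale.of_isSeparable ↥E F
  -- the square-zero extension F[ε]
  set t : S → TrivSqZeroExt F F :=
    fun i => inl (i : F) + inr (if (i : F) = x then 1 else 0) with ht
  set ρ : MvPolynomial S k →ₐ[k] TrivSqZeroExt F F := MvPolynomial.aeval t with hρ
  have hfstρ : (fstHom k F F).comp ρ = MvPolynomial.aeval ((↑) : S → F) := by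
    apply MvPolynomial.algHom_ext
    intro i
    simp only [AlgHom.coe_comp, Function.comp_apply, MvPolynomial.aeval_X, hρ]
    show fst (t i) = (i : F)
    rw [ht]
    simp only [fst_add, fst_inl, fst_inr, add_zero]
  have hinj : Function.Injective (MvPolynomial.aeval ((↑) : S → F)) :=
    algebraicIndependent_iff_injective_aeval.1 hindep
  have hu : ∀ y : nonZeroDivisors (MvPolynomial S k), IsUnit (ρ y) := by
    intro y
    rw [TrivSqZeroExt.isUnit_iff_isUnit_fst]
    have h1 : fst (ρ y) = MvPolynomial.aeval ((↑) : S → F) (y : MvPolynomial S k) :=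
      AlgHom.congr_fun hfstρ (y : MvPolynomial S k)
    rw [h1, isUnit_iff_ne_zero]
    intro h0
    have : (y : MvPolynomial S k) = 0 := hinj (by simpa using h0)
    exact nonZeroDivisors.coe_ne_zero y this
  set Frac := FractionRing (MvPolynomial S k) with hFrac
  set τf : Frac →ₐ[k] TrivSqZeroExt F F :=
    IsLocalization.liftAlgHom (M := nonZeroDivisors (MvPolynomial S k)) hu with hτfdef
  have hτf : ∀ p : MvPolynomial S k, τf (algebraMap _ Frac p) = ρ p := fun p =>
    IsLocalization.lift_eq hu p
  set τ : ↥E →ₐ[k] TrivSqZeroExt F F := τf.comp hindep.aevalEquivField.symm.toAlgHom with hτ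
  have hfstτ : ∀ e : ↥E, fst (τ e) = (e : F) := by
    have hcomp : (fstHom k F F).toRingHom.comp τf.toRingHom =
        IsFractionRing.lift (algebraicIndependent_iff_injective_aeval.2 hindep) := by
      apply IsLocalization.ringHom_ext (nonZeroDivisors (MvPolynomial S k))
      refine RingHom.ext fun p => ?_
      simp only [RingHom.coe_comp, Function.comp_apply, AlgHom.toRingHom_eq_coe,
        RingHom.coe_coe]
      rw [hτf, IsFractionRing.lift_algebraMap]
      exact AlgHom.congr_fun hfstρ p
    intro e
    have h2 : fst (τf (hindep.aevalEquivField.symm e)) =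
        IsFractionRing.lift (algebraicIndependent_iff_injective_aeval.2 hindep)
          (hindep.aevalEquivField.symm e) :=
      RingHom.congr_fun hcomp (hindep.aevalEquivField.symm e)
    have h3 := hindep.aevalEquivField_apply_coe (hindep.aevalEquivField.symm e)
    rw [AlgEquiv.apply_symm_apply] at h3
    rw [hτ]
    exact h2.trans h3.symm
  -- make F[ε] an E-algebra via τ
  letI : Algebra ↥E (TrivSqZeroExt F F) := τ.toRingHom.toAlgebra
  letI : @IsScalarTower k ↥E (TrivSqZeroExt F F) Algebra.toSMul Algebra.toSMul Algebra.toSMul :=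
    IsScalarTower.of_algebraMap_eq fun c => (τ.commutes c).symm
  set g : TrivSqZeroExt F F →ₐ[↥E] F :=
    { toRingHom := (fstHom k F F).toRingHom
      commutes' := fun e => hfstτ e } with hg
  have hgsurj : Function.Surjective g := fun y => ⟨inl y, fst_inl F y⟩
  set I : Ideal (TrivSqZeroExt F F) := RingHom.ker (g : TrivSqZeroExt F F →+* F) with hI
  have hker : I ^ 2 = ⊥ := by
    rw [pow_two, eq_bot_iff]
    refine Ideal.mul_le.2 fun a ha b hb => ?_
    have ha' : fst a = 0 := ha
    have hb' : fst b = 0 := hb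
    have hab : a * b = 0 := by
      have e1 : fst (a * b) = 0 := by rw [fst_mul, ha', zero_mul]
      have e2 : snd (a * b) = 0 := by
        rw [snd_mul, ha', hb']
        simp
      ext
      · rw [e1]; rfl
      · rw [e2]; rfl
    simp [hab]
  set σ : F →ₐ[↥E] TrivSqZeroExt F F :=
    Algebra.FormallySmooth.liftOfSurjective (AlgHom.id ↥E F) g hgsurj ⟨2, hker⟩ with hσdef
  have hσ : ∀ y : F, fst (σ y) = y := fun y =>
    Algebra.FormallySmooth.liftOfSurjective_apply (AlgHom.id ↥E F) g hgsurj ⟨2, hker⟩ y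
  have hcond : (Ideal.Quotient.mkₐ k I).comp (σ.restrictScalars k) =
      IsScalarTower.toAlgHom k F (TrivSqZeroExt F F ⧸ I) := by
    ext y
    show Ideal.Quotient.mk I (σ y) = algebraMap F (TrivSqZeroExt F F ⧸ I) y
    have h4 : algebraMap F (TrivSqZeroExt F F ⧸ I) y =
        Ideal.Quotient.mk I (algebraMap F (TrivSqZeroExt F F) y) := rfl
    rw [h4, Ideal.Quotient.mk_eq_mk_iff_sub_mem]
    show fst (σ y - algebraMap F (TrivSqZeroExt F F) y) = 0
    have h5 : algebraMap F (TrivSqZeroExt F F) y = inl y := rfl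
    rw [h5, fst_sub, hσ, fst_inl, sub_self]
  set δ : Derivation k F I := derivationToSquareZeroOfLift I hker (σ.restrictScalars k) hcond
    with hδ
  -- compute δ x
  have hxE : x ∈ E := IntermediateField.subset_adjoin k _ ⟨⟨x, hxS⟩, rfl⟩
  have hσx : σ x = inl x + inr 1 := by
    have h1 : x = algebraMap ↥E F ⟨x, hxE⟩ := rfl
    rw [h1, σ.commutes]
    show τ ⟨x, hxE⟩ = inl x + inr 1
    have hsymm : hindep.aevalEquivField.symm ⟨x, hxE⟩ =
        algebraMap (MvPolynomial S k) Frac (MvPolynomial.X ⟨x, hxS⟩) := by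
      rw [AlgEquiv.symm_apply_eq]
      apply Subtype.ext
      rw [hindep.aevalEquivField_algebraMap_apply_coe]
      simp
    rw [hτ]
    show τf (hindep.aevalEquivField.symm ⟨x, hxE⟩) = inl x + inr 1
    rw [hsymm, hτf]
    show MvPolynomial.aeval t (MvPolynomial.X ⟨x, hxS⟩) = inl x + inr 1
    rw [MvPolynomial.aeval_X, ht]
    simp
  have hδx : (δ x : TrivSqZeroExt F F) = inr 1 := by
    have h6 := derivationToSquareZeroOfLift_apply I hker (σ.restrictScalars k) hcond x
    have h2 : (δ x : TrivSqZeroExt F F) = σ x - algebraMap F (TrivSqZeroExt F F) x := h6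
    rw [h2, hσx]
    have h5 : algebraMap F (TrivSqZeroExt F F) x = inl x := rfl
    rw [h5]
    abel
  intro h0
  have h7 := Derivation.liftKaehlerDifferential_comp_D δ x
  rw [h0, map_zero] at h7
  have h1 : (δ x : TrivSqZeroExt F F) = 0 := by rw [← h7]; rfl
  rw [hδx] at h1
  have h8 := congrArg snd h1
  simp at h8



/-!
STATEMENT 0. `V` is an integral variety over an algebraically closed field `k` of
characteristic zero, `b` a smooth point, `W` an integral closed formal subscheme of the formal
completion of `V` at `b`.  We model the situation affinely: `A` is the (integral) coordinate
ring of an affine neighbourhood of `b` in `V`, `B` the (integral) coordinate ring of `W`, and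
`φ : A →ₐ[k] B` the restriction map.  "`W` is Zariski dense in `V`" means precisely that no
nonzero regular function on `V` vanishes on `W`, i.e. that `φ` is injective; thus
"`W` is not Zariski dense in `V`" is `¬ Function.Injective φ`.
Rational functions `hᵢ = fᵢ/gᵢ` are quotients of regular functions with `gᵢ` not vanishing
identically on `W` (`φ gᵢ ≠ 0`).  The hypothesis says that `h₁ · d h₂` is nonzero in the
Kähler differentials of the function field of `V` but its image vanishes in the Kähler
differentials of the function field of `W`.
-/
theorem stmt_0
    (k : Type*) [Field k] [IsAlgClosed k] [CharZero k]
    (A B : Type*) [CommRing A] [IsDomain A] [Algebra k A]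
    [CommRing B] [IsDomain B] [Algebra k B]
    (φ : A →ₐ[k] B)
    (f₁ g₁ f₂ g₂ : A)
    (hg₁ : φ g₁ ≠ 0) (hg₂ : φ g₂ ≠ 0)
    (hnonzero :
      (algebraMap A (FractionRing A) f₁ / algebraMap A (FractionRing A) g₁) •
        (KaehlerDifferential.D k (FractionRing A)
          (algebraMap A (FractionRing A) f₂ / algebraMap A (FractionRing A) g₂)) ≠ 0)
    (hzero :
      (algebraMap B (FractionRing B) (φ f₁) / algebraMap B (FractionRing B) (φ g₁)) •
        (KaehlerDifferential.D k (FractionRing B)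
          (algebraMap B (FractionRing B) (φ f₂) / algebraMap B (FractionRing B) (φ g₂))) = 0) :
    ¬ Function.Injective φ := by
  intro hinj
  have hginj : Function.Injective ((IsScalarTower.toAlgHom k B (FractionRing B)).comp φ) := by
    have h1 : Function.Injective (algebraMap B (FractionRing B)) :=
      IsFractionRing.injective B (FractionRing B)
    exact h1.comp hinj
  set ψ : FractionRing A →ₐ[k] FractionRing B := IsFractionRing.liftAlgHom hginj with hψdef
  have hψinj : Function.Injective ψ := ψ.toRingHom.injective
  have hψa : ∀ a : A, ψ (algebraMap A (FractionRing A) a) = algebraMap B (FractionRing B) (φ a) :=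
    fun a => IsFractionRing.lift_algebraMap hginj a
  set h₂K : FractionRing A :=
    algebraMap A (FractionRing A) f₂ / algebraMap A (FractionRing A) g₂ with hh₂K
  set h₂L : FractionRing B :=
    algebraMap B (FractionRing B) (φ f₂) / algebraMap B (FractionRing B) (φ g₂) with hh₂L
  have hψh₂ : ψ h₂K = h₂L := by rw [hh₂K, map_div₀, hψa, hψa]
  set c₁ : FractionRing A :=
    algebraMap A (FractionRing A) f₁ / algebraMap A (FractionRing A) g₁ with hc₁
  have hc₁ne : c₁ ≠ 0 := fun h => hnonzero (by rw [h, zero_smul])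
  have hD2ne : KaehlerDifferential.D k (FractionRing A) h₂K ≠ 0 :=
    fun h => hnonzero (by rw [h, smul_zero])
  have htrans : Transcendental k h₂K :=
    fun halg => hD2ne (D_eq_zero_of_isAlgebraic k _ _ halg)
  have htransL : Transcendental k h₂L := by
    rw [← hψh₂]
    exact fun halg => htrans ((isAlgebraic_algHom_iff ψ hψinj).mp halg)
  have hDLne := D_ne_zero_of_transcendental k (FractionRing B) h₂L htransL
  have hc₁L : ψ c₁ ≠ 0 := fun h => hc₁ne (hψinj (by rw [h, map_zero]))
  have hψc₁ : ψ c₁ = algebraMap B (FractionRing B) (φ f₁) / algebraMap B (FractionRing B) (φ g₁) :=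
    by rw [hc₁, map_div₀, hψa, hψa]
  rcases smul_eq_zero.mp hzero with h | h
  · exact hc₁L (by rw [hψc₁]; exact h)
  · exact hDLne h
end

section
/- Let V be an integral variety over an algebraically closed field, W an integral closed formal subscheme of the formal completion of V at a smooth point, and M an O_V-submodule of the free module O_V^{⊕r}. If the rank over the function field of W of the image of M ⊗ k(W) in k(W)^{⊕r} is strictly less than the rank of M ⊗ k(V) over the function field of V, then W is not Zariski dense in V. -/
/-!
An injective `φ : A → B` extends to an embedding of fraction fields `K → L`, and the image of
`M` in `L^r` is the image under this embedding of the image of `M` in `K^r`. Linear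
independence of vectors in `K^r` survives extension of scalars to `L`, so a basis of the
`K`-span of `M` stays independent in `L^r`, and the rank cannot drop.
-/

open Submodule Cardinal

universe u

theorem rank_span_le_rank_span_image_map {K L : Type u} {ι : Type*} [Field K] [Field L]
    [Finite ι] (ψ : K →+* L) (s : Set (ι → K)) :
    Module.rank K (span K s) ≤ Module.rank L (span L ((ψ ∘ ·) '' s)) := by
  let := ψ.toAlgebra
  obtain ⟨b, hbs, hspan, hb⟩ := exists_linearIndependent K s
  have hb' : LinearIndepOn L id ((ψ ∘ ·) '' b) :=
    LinearIndepOn.id_image (v := (ψ ∘ ·)) ((linearIndependent_algebraMap_comp_iff (S := L)).mpr hb)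
  calc Module.rank K (span K s) = #b := by rw [← hspan, rank_span_set hb]
    _ = #((ψ ∘ ·) '' b) := (mk_image_eq ψ.injective.comp_left).symm
    _ = Module.rank L (span L ((ψ ∘ ·) '' b)) := (rank_span_set hb').symm
    _ ≤ Module.rank L (span L ((ψ ∘ ·) '' s)) :=
      Submodule.rank_mono (span_mono (Set.image_mono hbs))

theorem stmt_1_general
    (k : Type*) [Field k]
    (A B : Type u) [CommRing A] [IsDomain A] [Algebra k A]
    [CommRing B] [IsDomain B] [Algebra k B]
    (φ : A →ₐ[k] B)
    (r : ℕ) (M : Submodule A (Fin r → A))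
    (hrank :
      Module.rank (FractionRing B)
        (Submodule.span (FractionRing B)
          ((fun m : Fin r → A => fun j => algebraMap B (FractionRing B) (φ (m j))) '' M)) <
      Module.rank (FractionRing A)
        (Submodule.span (FractionRing A)
          ((fun m : Fin r → A => fun j => algebraMap A (FractionRing A) (m j)) '' M))) :
    ¬ Function.Injective φ := by
  intro hinj
  have hinj' : Function.Injective ((algebraMap B (FractionRing B)).comp (φ : A →+* B)) :=
    (IsFractionRing.injective B (FractionRing B)).comp hinj
  set ψ : FractionRing A →+* FractionRing B := IsFractionRing.lift hinj'
  have himage : ((fun m : Fin r → A => fun j => algebraMap B (FractionRing B) (φ (m j))) '' M) =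
      (ψ ∘ ·) '' ((fun m : Fin r → A => fun j => algebraMap A (FractionRing A) (m j)) '' M) := by
    rw [Set.image_image]
    congr! with m _ j
    exact (IsFractionRing.lift_algebraMap hinj' (m j)).symm
  rw [himage] at hrank
  exact hrank.not_ge (rank_span_le_rank_span_image_map ψ _)

theorem stmt_1
    (k : Type*) [Field k] [IsAlgClosed k] [CharZero k]
    (A B : Type u) [CommRing A] [IsDomain A] [Algebra k A]
    [CommRing B] [IsDomain B] [Algebra k B]
    (φ : A →ₐ[k] B)
    (r : ℕ) (M : Submodule A (Fin r → A))
    (hrank :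
      Module.rank (FractionRing B)
        (Submodule.span (FractionRing B)
          ((fun m : Fin r → A => fun j => algebraMap B (FractionRing B) (φ (m j))) '' M)) <
      Module.rank (FractionRing A)
        (Submodule.span (FractionRing A)
          ((fun m : Fin r → A => fun j => algebraMap A (FractionRing A) (m j)) '' M))) :
    ¬ Function.Injective φ :=
  stmt_1_general k A B φ r M hrank
end

section
/- Let L be a finite-dimensional nilpotent Lie algebra over a field of characteristic zero, U its associated unipotent group (identified with L via exp), and consider the exponential map on formal functions. Then for a smooth path x(t) in L, the derivative of exp(x) satisfies d(exp(x)) = ((e^{ad_x} - 1)/ad_x)(dx) · e^x, where (e^{ad_x}-1)/ad_x denotes the finite operator sum Σ_{i≥0} (ad_x)^i/(i+1)! (which terminates since L is nilpotent), and the product on the right is in the universal enveloping algebra. -/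
/-!
In the dual numbers, `(x + ε dx)ⁿ = xⁿ + ε ∑_{j<n} xʲ dx xⁿ⁻¹⁻ʲ`, so the `ε`-part of
`exp (x + ε dx)` is `∑ₙ (1/n!) ∑_{j<n} lʲ rⁿ⁻¹⁻ʲ` applied to `dx`, where `l` and `r` are left and
right multiplication by `x`. These are commuting nilpotent operators with `l - r = ad_x`, and for
commuting `a, b` the binomial theorem gives `∑_{j<n} aʲ bⁿ⁻¹⁻ʲ = ∑ᵢ C(n, i+1) (a - b)ⁱ bⁿ⁻¹⁻ⁱ`.
Dividing by `n!` and summing is the truncated identity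
`(eᵃ - eᵇ)/(a - b) = eᵇ · (e^{a-b} - 1)/(a - b)`, the truncation being harmless by nilpotency.
With `a = l`, `b = r` it reads `d(exp x) = e^r (Φ) = Φ · eˣ`.
-/

open Finset
open scoped Nat RightActions

theorem TrivSqZeroExt.snd_inl_add_inr_pow {R M : Type*} [Semiring R] [AddCommMonoid M]
    [DistribMulAction R M] [DistribMulAction Rᵐᵒᵖ M] (x : R) (m : M) (n : ℕ) :
    snd ((inl x + inr m : TrivSqZeroExt R M) ^ n) =
      ∑ j ∈ range n, (x ^ j •> m <• x ^ (n - 1 - j) : M) := by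
  rw [snd_pow_eq_sum, ← sum_range_reflect]
  show ∑ i ∈ range n, _ = _
  refine sum_congr rfl fun j hj => ?_
  have : n - 1 - (n - 1 - j) = j := by rw [mem_range] at hj; omega
  simp [this]

theorem inv_factorial_mul_choose (K : Type*) [Field K] [CharZero K] {i n : ℕ} (h : i ≤ n) :
    (n ! : K)⁻¹ * n.choose i = (i ! : K)⁻¹ * ((n - i)! : K)⁻¹ := by
  rw [Nat.cast_choose K h, mul_div, inv_mul_cancel₀ (Nat.cast_ne_zero.mpr n.factorial_ne_zero),
    one_div, mul_inv]

namespace Commute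

variable {R : Type*} [Ring R]

theorem geom_sum₂_add_left_eq_sum_choose {b c : R} (h : Commute c b) (n : ℕ) :
    ∑ j ∈ range n, (c + b) ^ j * b ^ (n - 1 - j) =
      ∑ i ∈ range n, n.choose (i + 1) • (c ^ i * b ^ (n - 1 - i)) := by
  induction n with
  | zero => simp
  | succ n ih =>
    have hb : ∀ i ∈ range n, b * (c ^ i * b ^ (n - 1 - i)) = c ^ i * b ^ (n - i) := by
      intro i hi
      rw [← mul_assoc, (h.symm.pow_right i).eq, mul_assoc, ← pow_succ']
      congr 2
      rw [mem_range] at hi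
      omega
    simp only [Nat.add_sub_cancel, Nat.choose_succ_succ', add_smul, sum_add_distrib]
    rw [(h.add_left (Commute.refl b)).geom_sum₂_succ_eq, ih, mul_sum, h.add_pow,
      sum_range_succ (fun i => n.choose (i + 1) • (c ^ i * b ^ (n - i))) n,
      Nat.choose_succ_self, zero_smul, add_zero]
    congr 1
    · exact sum_congr rfl fun i _ => by rw [nsmul_eq_mul', mul_assoc]
    · exact sum_congr rfl fun i hi => by rw [mul_smul_comm, hb i hi]

theorem pow_mul_sub_pow_mul_pow_eq_zero {a b : R} (h : Commute a b) {p q i j m : ℕ}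
    (ha : a ^ p = 0) (hb : b ^ q = 0) (hijm : p + q ≤ i + j + m + 1) :
    a ^ j * (a - b) ^ i * b ^ m = 0 := by
  induction i generalizing j m with
  | zero =>
    rcases le_or_gt p j with hj | hm
    · rw [pow_eq_zero_of_le hj ha, zero_mul, zero_mul]
    · rw [pow_eq_zero_of_le (by omega) hb, mul_zero]
  | succ i ih =>
    have hc : Commute a ((a - b) ^ i) := ((Commute.refl a).sub_right h).pow_right i
    calc a ^ j * (a - b) ^ (i + 1) * b ^ m
        = a ^ j * (a * (a - b) ^ i) * b ^ m - a ^ j * (a - b) ^ i * (b * b ^ m) := by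
          rw [pow_succ, hc.eq]; noncomm_ring
      _ = a ^ (j + 1) * (a - b) ^ i * b ^ m - a ^ j * (a - b) ^ i * b ^ (m + 1) := by
          rw [pow_succ a j, pow_succ' b m, mul_assoc (a ^ j) a]
      _ = 0 := by rw [ih (by omega), ih (by omega), sub_zero]

theorem sum_inv_factorial_smul_geom_sum₂ (K : Type*) [Field K] [CharZero K] [Algebra K R]
    {a b : R} (h : Commute a b) {p q M : ℕ} (ha : a ^ p = 0) (hb : b ^ q = 0) (hM : p + q ≤ M) :
    ∑ n ∈ range M, (n ! : K)⁻¹ • ∑ j ∈ range n, a ^ j * b ^ (n - 1 - j) =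
      (∑ m ∈ range M, (m ! : K)⁻¹ • b ^ m) * ∑ i ∈ range M, ((i + 1)! : K)⁻¹ • (a - b) ^ i := by
  rcases M with _ | L
  · simp
  set F : ℕ → ℕ → R := fun i m => (((i + 1)! : K)⁻¹ * (m ! : K)⁻¹) • ((a - b) ^ i * b ^ m)
  have hF : ∀ i m, L ≤ i + m → F i m = 0 := fun i m him => by
    have := h.pow_mul_sub_pow_mul_pow_eq_zero ha hb (i := i) (j := 0) (m := m) (by omega)
    rw [pow_zero, one_mul] at this
    simp only [F, this, smul_zero]
  have hsum : ∀ n, ∑ j ∈ range (n + 1), a ^ j * b ^ (n - j) =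
      ∑ i ∈ range (n + 1), (n + 1).choose (i + 1) • ((a - b) ^ i * b ^ (n - i)) := by
    intro n
    simpa using ((h.sub_left (Commute.refl b)).geom_sum₂_add_left_eq_sum_choose (n + 1))
  calc ∑ n ∈ range (L + 1), (n ! : K)⁻¹ • ∑ j ∈ range n, a ^ j * b ^ (n - 1 - j)
      = ∑ n ∈ range L, ((n + 1)! : K)⁻¹ • ∑ j ∈ range (n + 1), a ^ j * b ^ (n - j) := by
        simp [sum_range_succ']
    _ = ∑ n ∈ range L, ∑ i ∈ range (n + 1), F i (n - i) := by
        refine sum_congr rfl fun n _ => ?_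
        rw [hsum, smul_sum]
        refine sum_congr rfl fun i hi => ?_
        rw [mem_range] at hi
        rw [← Nat.cast_smul_eq_nsmul K, smul_smul,
          inv_factorial_mul_choose K (by omega : i + 1 ≤ n + 1), Nat.add_sub_add_right]
    _ = ∑ i ∈ range L, ∑ m ∈ range (L - i), F i m := sum_range_diag_flip L F
    _ = ∑ i ∈ range (L + 1), ∑ m ∈ range (L + 1), F i m := by
        rw [sum_range_succ _ L, sum_eq_zero fun m _ => hF L m (by omega), add_zero]
        refine sum_congr rfl fun i _ => sum_subset ?_ fun m _ hm => hF i m ?_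
        · exact range_subset_range.mpr (by omega)
        · rw [mem_range, not_lt] at hm
          omega
    _ = _ := by
        rw [sum_mul_sum, sum_comm]
        refine sum_congr rfl fun m _ => sum_congr rfl fun i _ => ?_
        rw [smul_mul_smul_comm, mul_comm (m ! : K)⁻¹,
          ← ((h.sub_left (Commute.refl b)).pow_pow i m).eq]

end Commute

theorem stmt_3 (K : Type*) [Field K] [CharZero K]
    (A : Type*) [Ring A] [Algebra K A]
    (N : ℕ) (x dx : A) (hx : x ^ (N + 1) = 0) :
    let M := 2 * N + 3
    -- the (truncated) exponential on `A`
    let E : A → A := fun a => ∑ i ∈ Finset.range M, algebraMap K A ((i.factorial : K))⁻¹ * a ^ i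
    -- the (truncated) exponential on the dual numbers `A[ε]`
    let ED : DualNumber A → DualNumber A := fun a =>
      ∑ i ∈ Finset.range M,
        (TrivSqZeroExt.inl (algebraMap K A ((i.factorial : K))⁻¹) : DualNumber A) * a ^ i
    -- `Φ = ((e^{ad_x} - 1)/ad_x)(dx) = Σ_i (ad_x)^i (dx) / (i+1)!`
    let Φ : A := ∑ i ∈ Finset.range M,
      algebraMap K A (((i + 1).factorial : K))⁻¹ * ((fun y => x * y - y * x)^[i] dx)
    ED (TrivSqZeroExt.inl x + TrivSqZeroExt.inr dx) =
      TrivSqZeroExt.inl (E x) + TrivSqZeroExt.inr (Φ * E x) := by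
  intro M E ED Φ
  set l := LinearMap.mulLeft K x
  set r := LinearMap.mulRight K x
  have hl : l ^ (N + 1) = 0 := by rw [LinearMap.pow_mulLeft, hx, LinearMap.mulLeft_zero_eq_zero]
  have hr : r ^ (N + 1) = 0 := by
    rw [LinearMap.pow_mulRight, hx, LinearMap.mulRight_zero_eq_zero]
  have hlr : ⇑(l - r) = fun y => x * y - y * x := rfl
  set z : DualNumber A := TrivSqZeroExt.inl x + TrivSqZeroExt.inr dx
  have hz (n : ℕ) : (z ^ n).snd = ∑ j ∈ range n, x ^ j * dx * x ^ (n - 1 - j) := by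
    simp only [z, TrivSqZeroExt.snd_inl_add_inr_pow, smul_eq_mul, MulOpposite.smul_eq_mul_unop,
      MulOpposite.unop_op, mul_assoc]
  refine TrivSqZeroExt.ext ?_ ?_
  · simp only [ED, E, z, TrivSqZeroExt.inl_mul_eq_smul, TrivSqZeroExt.fst_sum,
      TrivSqZeroExt.fst_smul, TrivSqZeroExt.fst_pow, TrivSqZeroExt.fst_add, TrivSqZeroExt.fst_inl,
      TrivSqZeroExt.fst_inr, add_zero, smul_eq_mul]
  · rw [TrivSqZeroExt.snd_add, TrivSqZeroExt.snd_inl, TrivSqZeroExt.snd_inr, zero_add]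
    calc (ED z).snd
        = ∑ n ∈ range M,
            algebraMap K A (n ! : K)⁻¹ * ∑ j ∈ range n, x ^ j * dx * x ^ (n - 1 - j) := by
          simp only [ED, TrivSqZeroExt.inl_mul_eq_smul, TrivSqZeroExt.snd_sum,
            TrivSqZeroExt.snd_smul, hz, smul_eq_mul]
      _ = (∑ n ∈ range M, (n ! : K)⁻¹ • ∑ j ∈ range n, l ^ j * r ^ (n - 1 - j)) dx := by
          simp [l, r, LinearMap.sum_apply, LinearMap.pow_mulLeft, LinearMap.pow_mulRight,
            Algebra.smul_def, mul_assoc, mul_sum]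
      _ = ((∑ m ∈ range M, (m ! : K)⁻¹ • r ^ m) *
            ∑ i ∈ range M, ((i + 1)! : K)⁻¹ • (l - r) ^ i) dx :=
          LinearMap.congr_fun ((LinearMap.commute_mulLeft_right x x).sum_inv_factorial_smul_geom_sum₂
            K hl hr (by omega)) dx
      _ = (∑ m ∈ range M, (m ! : K)⁻¹ • r ^ m) Φ := by
          simp [Φ, LinearMap.sum_apply, Module.End.pow_apply, hlr, Algebra.smul_def]
      _ = Φ * E x := by
          simp [E, r, LinearMap.sum_apply, LinearMap.pow_mulRight, ← Algebra.smul_def, mul_sum]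
end

section
/- Linear algebra lemma underlying the graded Selmer bound: let B = B_1 ⊃ B_2 ⊃ ... ⊃ B_N ⊃ B_{N+1} = 0 be a finite filtered vector space, A ⊂ B a strict filtered subspace (A_i = A ∩ B_i), and suppose given vector spaces C_{i,j} (i < j) with linear maps φ_{i,j}: C_{i,j} → B_i/B_j fitting into commutative diagrams where 0 → C_{j,k} → C_{i,k} → C_{i,j} is exact over the exact rows 0 → B_j/B_k → B_i/B_k → B_i/B_j → 0. Then for all i < j: dim(φ_{i,j}(C_{i,j}) ∩ (A_i/A_j)) ≤ Σ_{i≤k<j} dim(φ_{k,k+1}(C_{k,k+1}) ∩ (A_k/A_{k+1})) + Σ_{i<k<j} dim Ker(φ_{k-1,k}). -/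
/-!
Induct on `j - i`, splitting at `i + 1`. For `i < j < k` let `S ⊆ C_{i,k}` be the preimage of
`A_i/A_k`, so that `φ_{i,k}(S) = φ_{i,k}(C_{i,k}) ∩ A_i/A_k`, and compare `φ_{i,k}(S)` with
`c(S) ⊆ C_{i,j}` and `φ_{i,k}(S ∩ ker c)`. By commutativity `φ_{i,j}(c(S)) = p(φ_{i,k}(S))` lies
in `φ_{i,j}(C_{i,j}) ∩ A_i/A_j`, which bounds `dim c(S)` up to `dim ker φ_{i,j}`. By exactness
`S ∩ ker c` comes from `C_{j,k}`, and as the filtration on `A` is induced, its image lies in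
`ι(φ_{j,k}(C_{j,k}) ∩ A_j/A_k)`.
-/

open Module Submodule LinearMap

section RankNullity

variable {K V W Y : Type*} [Field K] [AddCommGroup V] [Module K V] [AddCommGroup W] [Module K W]
  [AddCommGroup Y] [Module K Y] [FiniteDimensional K V]

theorem Submodule.finrank_map_add_finrank_inf_ker (f : V →ₗ[K] W) (S : Submodule K V) :
    finrank K (S.map f) + finrank K ↥(S ⊓ ker f) = finrank K S := by
  have h := finrank_range_add_finrank_ker (f.domRestrict S)
  rw [range_domRestrict, ker_domRestrict] at h
  rwa [← (comapSubtypeEquivOfLe (inf_le_left : S ⊓ ker f ≤ S)).finrank_eq, comap_inf,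
    comap_subtype_self, top_inf_eq]

theorem Submodule.finrank_le_finrank_map_add_finrank_ker (f : V →ₗ[K] W) (S : Submodule K V) :
    finrank K S ≤ finrank K (S.map f) + finrank K (ker f) := by
  have := finrank_map_add_finrank_inf_ker f S
  have := finrank_mono (inf_le_right : S ⊓ ker f ≤ ker f)
  omega

-- `f(S) / f(S ⊓ ker g)` is a quotient of `S / (S ⊓ ker g) ≅ g(S)`.
theorem Submodule.finrank_map_le_finrank_map_inf_ker_add_finrank_map (f : V →ₗ[K] W)
    (g : V →ₗ[K] Y) (S : Submodule K V) :
    finrank K (S.map f) ≤ finrank K ((S ⊓ ker g).map f) + finrank K (S.map g) := by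
  have hS := finrank_map_add_finrank_inf_ker f S
  have hSg := finrank_map_add_finrank_inf_ker g S
  have hSgf := finrank_map_add_finrank_inf_ker f (S ⊓ ker g)
  have := finrank_mono (inf_le_inf_right (ker f) (inf_le_left : S ⊓ ker g ≤ S))
  omega

end RankNullity

theorem finrank_range_inf_le_add_finrank_ker_add {K Cij Cik Cjk Mij Mik Mjk : Type*} [Field K]
    [AddCommGroup Cij] [Module K Cij] [AddCommGroup Cik] [Module K Cik]
    [AddCommGroup Cjk] [Module K Cjk] [AddCommGroup Mij] [Module K Mij]
    [AddCommGroup Mik] [Module K Mik] [AddCommGroup Mjk] [Module K Mjk]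
    [FiniteDimensional K Cij] [FiniteDimensional K Cik] [FiniteDimensional K Mjk]
    {φij : Cij →ₗ[K] Mij} {φik : Cik →ₗ[K] Mik} {φjk : Cjk →ₗ[K] Mjk}
    {p : Mik →ₗ[K] Mij} {ι : Mjk →ₗ[K] Mik} {c : Cik →ₗ[K] Cij} {cι : Cjk →ₗ[K] Cik}
    {Aij : Submodule K Mij} {Aik : Submodule K Mik} {Ajk : Submodule K Mjk}
    (hc : ker c ≤ range cι) (hφp : p ∘ₗ φik = φij ∘ₗ c) (hφι : ι ∘ₗ φjk = φik ∘ₗ cι)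
    (hpA : Aik.map p ≤ Aij) (hιA : Aik.comap ι ≤ Ajk) :
    finrank K ↥(range φik ⊓ Aik) ≤
      finrank K ↥(range φij ⊓ Aij) + finrank K (ker φij) + finrank K ↥(range φjk ⊓ Ajk) := by
  set S := Aik.comap φik
  have hS : S.map φik = range φik ⊓ Aik := map_comap_eq φik Aik
  have hproj : (S.map c).map φij ≤ range φij ⊓ Aij := by
    rintro _ ⟨_, ⟨x, hxA, rfl⟩, rfl⟩
    have hx : p (φik x) = φij (c x) := LinearMap.congr_fun hφp x
    exact ⟨⟨c x, rfl⟩, hx ▸ hpA ⟨φik x, hxA, rfl⟩⟩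
  have hsub : (S ⊓ ker c).map φik ≤ (range φjk ⊓ Ajk).map ι := by
    rintro _ ⟨x, ⟨hxA, hxc⟩, rfl⟩
    obtain ⟨y, rfl⟩ := hc hxc
    have hy : ι (φjk y) = φik (cι y) := LinearMap.congr_fun hφι y
    exact ⟨φjk y, ⟨⟨y, rfl⟩, hιA (show ι (φjk y) ∈ Aik by rw [hy]; exact hxA)⟩, hy⟩
  calc finrank K ↥(range φik ⊓ Aik)
      ≤ finrank K ((S ⊓ ker c).map φik) + finrank K (S.map c) :=
        hS ▸ finrank_map_le_finrank_map_inf_ker_add_finrank_map φik c S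
    _ ≤ finrank K ↥(range φjk ⊓ Ajk) + (finrank K ((S.map c).map φij) + finrank K (ker φij)) :=
        add_le_add ((finrank_mono hsub).trans (finrank_map_le _ _))
          (finrank_le_finrank_map_add_finrank_ker φij _)
    _ ≤ finrank K ↥(range φjk ⊓ Ajk) + (finrank K ↥(range φij ⊓ Aij) + finrank K (ker φij)) := by
        gcongr; exact finrank_mono hproj
    _ = _ := by omega

theorem stmt_7_general (F : Type*) [Field F]
    (M : ℕ → ℕ → Type*) [∀ i j, AddCommGroup (M i j)] [∀ i j, Module F (M i j)]
    [∀ i j, FiniteDimensional F (M i j)]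
    (C : ℕ → ℕ → Type*) [∀ i j, AddCommGroup (C i j)] [∀ i j, Module F (C i j)]
    [∀ i j, FiniteDimensional F (C i j)]
    (p : ∀ i j k, M i k →ₗ[F] M i j)
    (ι : ∀ i j k, M j k →ₗ[F] M i k)
    (A : ∀ i j, Submodule F (M i j))
    (φ : ∀ i j, C i j →ₗ[F] M i j)
    (c : ∀ i j k, C i k →ₗ[F] C i j)
    (cι : ∀ i j k, C j k →ₗ[F] C i k)
    -- exactness of  0 → C_{j,k} → C_{i,k} → C_{i,j}
    (hCexact : ∀ i j k, i < j → j < k → LinearMap.range (cι i j k) = LinearMap.ker (c i j k))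
    -- commutativity of the diagrams
    (hφp : ∀ i j k, i < j → j < k → (p i j k) ∘ₗ (φ i k) = (φ i j) ∘ₗ (c i j k))
    (hφι : ∀ i j k, i < j → j < k → (ι i j k) ∘ₗ (φ j k) = (φ i k) ∘ₗ (cι i j k))
    -- the filtration on A is induced from B and strict
    (hpA : ∀ i j k, i < j → j < k → (A i k).map (p i j k) = A i j)
    (hιA : ∀ i j k, i < j → j < k → (A i k).comap (ι i j k) = A j k) :
    ∀ i j, i < j →
      Module.finrank F ↥(LinearMap.range (φ i j) ⊓ A i j) ≤
        (∑ k ∈ Finset.Ico i j,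
          Module.finrank F ↥(LinearMap.range (φ k (k + 1)) ⊓ A k (k + 1))) +
        ∑ k ∈ Finset.Ico i (j - 1), Module.finrank F ↥(LinearMap.ker (φ k (k + 1))) := by
  intro i j hij
  obtain ⟨n, rfl⟩ : ∃ n, j = i + n + 1 := ⟨j - i - 1, by omega⟩
  induction n generalizing i with
  | zero => simp
  | succ n ih =>
    have hi : i < i + 1 := by omega
    have hj : i + 1 < i + (n + 1) + 1 := by omega
    have hstep := finrank_range_inf_le_add_finrank_ker_add (hCexact _ _ _ hi hj).ge
      (hφp _ _ _ hi hj) (hφι _ _ _ hi hj) (hpA _ _ _ hi hj).le (hιA _ _ _ hi hj).le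
    have hrest := ih (i + 1) (by omega)
    rw [show i + 1 + n + 1 = i + (n + 1) + 1 by omega] at hrest
    rw [Finset.sum_eq_sum_Ico_succ_bot (show i < i + (n + 1) + 1 by omega),
      Finset.sum_eq_sum_Ico_succ_bot (show i < i + (n + 1) + 1 - 1 by omega)]
    omega

theorem stmt_7 (F : Type*) [Field F]
    (M : ℕ → ℕ → Type*) [∀ i j, AddCommGroup (M i j)] [∀ i j, Module F (M i j)]
    [∀ i j, FiniteDimensional F (M i j)]
    (C : ℕ → ℕ → Type*) [∀ i j, AddCommGroup (C i j)] [∀ i j, Module F (C i j)]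
    [∀ i j, FiniteDimensional F (C i j)]
    (p : ∀ i j k, M i k →ₗ[F] M i j)
    (ι : ∀ i j k, M j k →ₗ[F] M i k)
    (A : ∀ i j, Submodule F (M i j))
    (φ : ∀ i j, C i j →ₗ[F] M i j)
    (c : ∀ i j k, C i k →ₗ[F] C i j)
    (cι : ∀ i j k, C j k →ₗ[F] C i k)
    -- exact rows  0 → B_j/B_k → B_i/B_k → B_i/B_j → 0
    (hι_inj : ∀ i j k, i < j → j < k → Function.Injective (ι i j k))
    (hp_surj : ∀ i j k, i < j → j < k → Function.Surjective (p i j k))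
    (hexact : ∀ i j k, i < j → j < k → LinearMap.range (ι i j k) = LinearMap.ker (p i j k))
    -- exactness of  0 → C_{j,k} → C_{i,k} → C_{i,j}
    (hcι_inj : ∀ i j k, i < j → j < k → Function.Injective (cι i j k))
    (hCexact : ∀ i j k, i < j → j < k → LinearMap.range (cι i j k) = LinearMap.ker (c i j k))
    -- commutativity of the diagrams
    (hφp : ∀ i j k, i < j → j < k → (p i j k) ∘ₗ (φ i k) = (φ i j) ∘ₗ (c i j k))
    (hφι : ∀ i j k, i < j → j < k → (ι i j k) ∘ₗ (φ j k) = (φ i k) ∘ₗ (cι i j k))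
    -- the filtration on A is induced from B and strict
    (hpA : ∀ i j k, i < j → j < k → (A i k).map (p i j k) = A i j)
    (hιA : ∀ i j k, i < j → j < k → (A i k).comap (ι i j k) = A j k)
    (hιA' : ∀ i j k, i < j → j < k → (A j k).map (ι i j k) ≤ A i k) :
    ∀ i j, i < j →
      Module.finrank F ↥(LinearMap.range (φ i j) ⊓ A i j) ≤
        (∑ k ∈ Finset.Ico i j,
          Module.finrank F ↥(LinearMap.range (φ k (k + 1)) ⊓ A k (k + 1))) +
        ∑ k ∈ Finset.Ico i (j - 1), Module.finrank F ↥(LinearMap.ker (φ k (k + 1))) :=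
  stmt_7_general F M C p ι A φ c cι hCexact hφp hφι hpA hιA
end
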